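/- Let 𝒜 be a central hyperplane arrangement and ℜ ⊆ F(𝒜). Then J(ℜ) = I(ℜ) ∩ (J(ℜ) + (x_[n])), and I(ℜ) is the unique associated prime ideal of J(ℜ) (i.e., of the S-module S/J(ℜ)) that contains none of the variables x_1, …, x_n. -/

import Mathlib

open MvPolynomial

noncomputable section

variable {K : Type*} [Field K] {n : ℕ}

open Classical in
/-- The support `supp(a) = {i : aᵢ ≠ 0}` of the linear form `∑ᵢ aᵢ xᵢ ∈ S₁`,
where linear forms of `S = K[x₁,…,xₙ]` are identified with their coefficient
vectors `a : Fin n → K`. -/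
def lsupp (a : Fin n → K) : Finset (Fin n) :=
  Finset.univ.filter (fun i => a i ≠ 0)

/-- `ι(r) = ∑_{i ∈ supp r} aᵢ · x_{supp(r) ∖ {i}}` for the linear form `r = ∑ᵢ aᵢ xᵢ`. -/
def iotaL (a : Fin n → K) : MvPolynomial (Fin n) K :=
  ∑ i ∈ lsupp a, C (a i) * ∏ j ∈ (lsupp a).erase i, X j

/-- `x_[n] = x₁⋯xₙ`. -/
def xAll (n : ℕ) (K : Type*) [Field K] : MvPolynomial (Fin n) K := ∏ i, X i

/-- `a : Fin n → K` (identified with the linear form `∑ᵢ aᵢ xᵢ ∈ S₁`) is a relation of the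
central arrangement whose hyperplanes are the kernels of the linear forms `α i`, i.e. it lies
in the kernel of the map `S₁ → V*`, `xᵢ ↦ αᵢ`. -/
def IsRel {V : Type*} [AddCommGroup V] [Module K V]
    (α : Fin n → Module.Dual K V) (a : Fin n → K) : Prop :=
  ∑ i, a i • α i = 0

/-- `J(ℜ) = (ι(r) : r ∈ ℜ)`. -/
def Jid (R : Set (Fin n → K)) : Ideal (MvPolynomial (Fin n) K) :=
  Ideal.span (iotaL '' R)

/-- `I(ℜ) = (ι(r) : r ∈ K·ℜ)`. -/
def Iid (R : Set (Fin n → K)) : Ideal (MvPolynomial (Fin n) K) :=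
  Ideal.span (iotaL '' (Submodule.span K R : Set (Fin n → K)))

/-- The Orlik–Terao ideal `I(𝒜) = (ι(r) : r ∈ F(𝒜))`. -/
def OTid {V : Type*} [AddCommGroup V] [Module K V]
    (α : Fin n → Module.Dual K V) : Ideal (MvPolynomial (Fin n) K) :=
  Ideal.span (iotaL '' {a | IsRel α a})

/-- The codimension (height) of an ideal `I`: the infimum of the heights, in the prime
spectrum, of the prime ideals containing `I`. -/
def codim {R : Type*} [CommRing R] (I : Ideal R) : ℕ∞ :=
  ⨅ p ∈ {p : PrimeSpectrum R | I ≤ p.asIdeal}, Order.height p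


/-!
Put `W = K·ℜ` and choose vectors `c₁, …, cₙ` whose linear relations are exactly `W`; they are
nonzero because `αᵢ ≠ 0`. Then `I(ℜ)` is the kernel of `xᵢ ↦ 1 / ℓ(cᵢ)` into a field, hence prime
and free of variables. Indeed, modulo `I(ℜ)` every monomial straightens (by a weight argument) to
monomials supported on sets without broken circuits, and the images of these, after clearing
denominators, are products of powers of linear forms that are linearly independent
(deletion–contraction on the last vector).
Finally `x_[n] · ι(r) = x_{supp r} · θ(r)` with `θ` linear gives `x_[n] · I(ℜ) ⊆ J(ℜ) ⊆ I(ℜ)`, so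
`I(ℜ) = J(ℜ) : x_[n]`, and all claims follow from `x_[n] ∉ I(ℜ)`.
-/

section ColonIdeal

variable {S : Type*} [CommRing S] {I J : Ideal S} {x : S}

theorem Ideal.colon_bot_singleton_mk (J : Ideal S) (f : S) :
    (⊥ : Submodule S (S ⧸ J)).colon {Ideal.Quotient.mk J f} = J.colon {f} := by
  ext a
  simp [Submodule.mem_colon_singleton, Algebra.smul_def, ← map_mul, Ideal.Quotient.eq_zero_iff_mem]

theorem Ideal.eq_inf_sup_span_singleton_of_le_colon (hJI : J ≤ I) (hI : I.IsPrime) (hx : x ∉ I)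
    (hIx : I ≤ J.colon {x}) : J = I ⊓ (J ⊔ Ideal.span {x}) := by
  refine le_antisymm (le_inf hJI le_sup_left) fun f hf => ?_
  obtain ⟨hfI, hf⟩ := Submodule.mem_inf.mp hf
  obtain ⟨g, hg, y, hy, rfl⟩ := Submodule.mem_sup.mp hf
  obtain ⟨h, rfl⟩ := Ideal.mem_span_singleton'.mp hy
  have hh : h ∈ I := (hI.mem_or_mem (by simpa using I.sub_mem hfI (hJI hg))).resolve_right hx
  exact J.add_mem hg (Submodule.mem_colon_singleton.mp (hIx hh))

theorem Ideal.mem_associatedPrimes_quotient_of_le_colon (hJI : J ≤ I) (hI : I.IsPrime)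
    (hx : x ∉ I) (hIx : I ≤ J.colon {x}) : I ∈ associatedPrimes S (S ⧸ J) := by
  refine ⟨hI, Ideal.Quotient.mk J x, ?_⟩
  rw [Ideal.colon_bot_singleton_mk, ← le_antisymm hIx fun a ha => ?_, hI.radical]
  exact (hI.mem_or_mem (hJI (Submodule.mem_colon_singleton.mp ha))).resolve_right hx

theorem Ideal.eq_of_mem_associatedPrimes_quotient_of_le_colon (hJI : J ≤ I) (hI : I.IsPrime)
    (hIx : I ≤ J.colon {x}) {P : Ideal S} (hP : P ∈ associatedPrimes S (S ⧸ J)) (hxP : x ∉ P) :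
    P = I := by
  obtain ⟨hPp, g, hPg⟩ := hP
  obtain ⟨f, rfl⟩ := Ideal.Quotient.mk_surjective g
  rw [Ideal.colon_bot_singleton_mk] at hPg
  have hmem : ∀ {a}, a * f ∈ J → a ∈ P := fun h =>
    hPg ▸ Ideal.le_radical (Submodule.mem_colon_singleton.mpr h)
  have hf : f ∉ I := fun hf => hxP (hmem (by simpa [mul_comm] using hIx hf))
  apply le_antisymm
  · rw [hPg, hI.radical_le_iff]
    exact fun a ha => (hI.mem_or_mem (hJI (Submodule.mem_colon_singleton.mp ha))).resolve_right hf
  · intro a ha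
    have hxa : x * a ∈ P := hmem (J.mul_mem_right f (by simpa [mul_comm] using hIx ha))
    exact (hPp.mem_or_mem hxa).resolve_left hxP

end ColonIdeal

theorem Submodule.exists_ker_eq {E : Type*} [AddCommGroup E] [Module K E] (W : Submodule K E) :
    ∃ π : E →ₗ[K] E, LinearMap.ker π = W := by
  obtain ⟨U, hU⟩ := W.exists_isCompl
  exact ⟨U.projection W hU.symm, Submodule.ker_projection _⟩

theorem exists_ker_fintypeLinearCombination_eq {ι : Type*} [Fintype ι] [DecidableEq ι]
    (W : Submodule K (ι → K)) :
    ∃ c : ι → ι → K, LinearMap.ker (Fintype.linearCombination K c) = W := by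
  obtain ⟨π, hπ⟩ := W.exists_ker_eq
  refine ⟨fun i => π (Pi.single i 1), ?_⟩
  rw [← hπ]
  congr 1
  refine LinearMap.pi_ext fun i a => ?_
  rw [Fintype.linearCombination_apply_single, ← map_smul, ← Pi.single_smul', smul_eq_mul, mul_one]

section LinearForm

variable {σ τ : Type*} [Fintype σ] [Fintype τ]

def linearForm : (σ → K) →ₗ[K] MvPolynomial σ K := Fintype.linearCombination K X

theorem linearForm_injective :
    Function.Injective (linearForm : (σ → K) →ₗ[K] MvPolynomial σ K) :=
  (linearIndependent_X σ K).fintypeLinearCombination_injective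

theorem linearForm_single [DecidableEq σ] (j : σ) (a : K) :
    linearForm (Pi.single j a) = a • (X j : MvPolynomial σ K) :=
  Fintype.linearCombination_apply_single K X j a

theorem aeval_linearForm [DecidableEq σ] (π : (σ → K) →ₗ[K] (τ → K)) (v : σ → K) :
    aeval (fun j => linearForm (π (Pi.single j 1))) (linearForm v) = linearForm (π v) := by
  have : (aeval fun j => linearForm (π (Pi.single j 1))).toLinearMap ∘ₗ linearForm =
      (linearForm ∘ₗ π : (σ → K) →ₗ[K] MvPolynomial τ K) :=
    LinearMap.pi_ext fun j a => by
      have hsingle : Pi.single j a = a • (Pi.single j 1 : σ → K) := by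
        rw [← Pi.single_smul', smul_eq_mul, mul_one]
      rw [LinearMap.comp_apply, LinearMap.comp_apply, linearForm_single,
        AlgHom.toLinearMap_apply, map_smul, aeval_X, hsingle, map_smul, map_smul]
  exact LinearMap.congr_fun this v

end LinearForm

section NoBrokenCircuit

variable {R ι E E' : Type*} [LinearOrder ι]

variable (R) in
/-- A reformulation of "`Γ` contains no broken circuit of `c`", a broken circuit being a circuit
of `c` with its least element removed. -/
def NoBrokenCircuit [Semiring R] [AddCommMonoid E] [Module R E] (c : ι → E) (Γ : Set ι) : Prop :=
  ∀ j, c j ∉ Submodule.span R (c '' (Γ ∩ Set.Ioi j))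

theorem NoBrokenCircuit.ne_zero [Semiring R] [AddCommMonoid E] [Module R E] {c : ι → E}
    {Γ : Set ι} (h : NoBrokenCircuit R c Γ) (j : ι) : c j ≠ 0 :=
  fun h0 => h j (h0 ▸ zero_mem _)

theorem NoBrokenCircuit.comp_castSucc [Ring R] [AddCommGroup E] [Module R E] [AddCommGroup E']
    [Module R E'] {n : ℕ} {c : Fin (n + 1) → E} {Γ : Set (Fin (n + 1))}
    (h : NoBrokenCircuit R c Γ) (π : E →ₗ[R] E')
    (hπ : LinearMap.ker π ≤ Submodule.span R (c '' (Γ ∩ {Fin.last n}))) :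
    NoBrokenCircuit R (π ∘ c ∘ Fin.castSucc) (Fin.castSucc ⁻¹' Γ) := by
  intro j hj
  rw [Set.image_comp, Set.image_comp, Submodule.span_image] at hj
  obtain ⟨w, hw, hπw⟩ := Submodule.mem_map.mp hj
  have hker : c j.castSucc - w ∈ Submodule.span R (c '' (Γ ∩ {Fin.last n})) :=
    hπ (by simp [hπw])
  apply h j.castSucc
  rw [← add_sub_cancel w (c j.castSucc)]
  refine add_mem (Submodule.span_mono (Set.image_mono ?_) hw)
    (Submodule.span_mono (Set.image_mono ?_) hker)
  · rintro _ ⟨i, ⟨hiΓ, hij⟩, rfl⟩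
    exact ⟨hiΓ, Fin.castSucc_lt_castSucc_iff.mpr hij⟩
  · rintro i ⟨hiΓ, rfl⟩
    exact ⟨hiΓ, Fin.castSucc_lt_last j⟩

theorem exists_relation_of_not_noBrokenCircuit [AddCommGroup E] [Module K E] {c : Fin n → E}
    {Γ : Set (Fin n)} (h : ¬NoBrokenCircuit K c Γ) :
    ∃ j a, Fintype.linearCombination K c a = 0 ∧ a j = 1 ∧
      ∀ i ∈ (lsupp a).erase j, i ∈ Γ ∧ j < i := by
  classical
  obtain ⟨j, hj⟩ : ∃ j, c j ∈ Submodule.span K (c '' (Γ ∩ Set.Ioi j)) := by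
    simpa [NoBrokenCircuit] using h
  obtain ⟨l, hl, hlc⟩ := Finsupp.mem_span_image_iff_linearCombination K |>.mp hj
  have hlj : l j = 0 := Finsupp.notMem_support_iff.mp fun hj' => lt_irrefl j (hl hj').2
  refine ⟨j, Pi.single j 1 - ⇑l, ?_, by simp [hlj], fun i hi => hl ?_⟩
  · rw [map_sub, Fintype.linearCombination_apply_single, one_smul, ← hlc,
      Finsupp.linearCombination_apply, Finsupp.sum_fintype _ _ (by simp),
      Fintype.linearCombination_apply, sub_self]
  · obtain ⟨hij, hi⟩ := Finset.mem_erase.mp hi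
    simpa [lsupp, hij] using hi

end NoBrokenCircuit

theorem weight_lt_of_monomial_mul_X_eq {σ : Type*} [LinearOrder σ] {w : σ → ℕ}
    (hw : StrictMono w) {μ ν : σ →₀ ℕ} {i j : σ} (hji : j < i)
    (h : monomial μ (1 : K) * X i = monomial ν 1 * X j) :
    Finsupp.weight w μ < Finsupp.weight w ν := by
  simp only [X, monomial_mul, one_mul] at h
  have := congrArg (Finsupp.weight w) (monomial_left_injective one_ne_zero h)
  simp only [map_add, Finsupp.weight_single, one_smul] at this
  have := hw hji
  omega

theorem prod_X_eq_monomial {σ : Type*} (s : Finset σ) :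
    ∏ i ∈ s, (X i : MvPolynomial σ K) = monomial (∑ i ∈ s, Finsupp.single i 1) 1 := by
  rw [monomial_sum_one]
  rfl

theorem monomial_mem_sup_span_lower_weight {E : Type*} [AddCommGroup E] [Module K E] {c : Fin n → E}
    {I : Ideal (MvPolynomial (Fin n) K)}
    (hI : ∀ a, Fintype.linearCombination K c a = 0 → iotaL a ∈ I) {ν : Fin n →₀ ℕ}
    (hν : ¬NoBrokenCircuit K c {i | ν i ≠ 0}) :
    monomial ν 1 ∈ I.restrictScalars K ⊔ Submodule.span K
      ((monomial · 1) '' {μ | Finsupp.weight Fin.val μ < Finsupp.weight Fin.val ν}) := by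
  obtain ⟨j, a, ha, haj, hsupp⟩ := exists_relation_of_not_noBrokenCircuit hν
  have hj : j ∈ lsupp a := by simp [lsupp, haj]
  set T := (lsupp a).erase j
  set m : MvPolynomial (Fin n) K := monomial (ν - ∑ i ∈ T, Finsupp.single i 1) 1
  have hνT : monomial ν 1 = m * ∏ i ∈ T, X i := by
    rw [prod_X_eq_monomial, monomial_mul, one_mul, tsub_add_cancel_of_le]
    intro k
    simp only [Finsupp.coe_finsetSum, Finset.sum_apply, Finsupp.single_apply, Finset.sum_ite_eq']
    split_ifs with hk
    exacts [Nat.one_le_iff_ne_zero.mpr (hsupp k hk).1, Nat.zero_le _]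
  have hιa : iotaL a = ∏ i ∈ T, X i + ∑ i ∈ T, C (a i) * ∏ k ∈ (lsupp a).erase i, X k := by
    rw [iotaL, ← Finset.add_sum_erase _ _ hj, haj, map_one, one_mul]
  -- Each `m * x_{supp a ∖ {i}}` below trades `xᵢ` for `xⱼ` with `j < i`: its weight is lower.
  have hν' : monomial ν 1 =
      m * iotaL a - ∑ i ∈ T, a i • (m * ∏ k ∈ (lsupp a).erase i, X k) := by
    rw [hιa, mul_add, Finset.mul_sum, ← hνT]
    simp only [smul_eq_C_mul, mul_left_comm (C _) m, add_sub_cancel_right]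
  have hmono : ∀ s : Finset (Fin n), m * ∏ k ∈ s, X k =
      monomial ((ν - ∑ i ∈ T, Finsupp.single i 1) + ∑ k ∈ s, Finsupp.single k 1) 1 := fun s => by
    rw [prod_X_eq_monomial, monomial_mul, one_mul]
  rw [hν']
  refine sub_mem (Submodule.mem_sup_left (I.mul_mem_left m (hI a ha)))
    (sum_mem fun i hi => Submodule.smul_mem _ _ (Submodule.mem_sup_right
      (Submodule.subset_span ⟨_, ?_, (hmono _).symm⟩)))
  refine weight_lt_of_monomial_mul_X_eq (K := K) Fin.val_strictMono (hsupp i hi).2 ?_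
  rw [← hmono, hνT, mul_assoc, mul_assoc, Finset.prod_erase_mul _ _ (Finset.mem_of_mem_erase hi),
    Finset.prod_erase_mul _ _ hj]

theorem sup_restrictSupport_noBrokenCircuit_eq_top {E : Type*} [AddCommGroup E] [Module K E]
    (c : Fin n → E) {I : Ideal (MvPolynomial (Fin n) K)}
    (hI : ∀ a, Fintype.linearCombination K c a = 0 → iotaL a ∈ I) :
    I.restrictScalars K ⊔ restrictSupport K {ν | NoBrokenCircuit K c {i | ν i ≠ 0}} = ⊤ := by
  set P := I.restrictScalars K ⊔ restrictSupport K {ν | NoBrokenCircuit K c {i | ν i ≠ 0}}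
  suffices hmon : ∀ ν, monomial ν (1 : K) ∈ P by
    rw [eq_top_iff, ← (basisMonomials (Fin n) K).span_eq, Submodule.span_le]
    rintro _ ⟨ν, rfl⟩
    simpa using hmon ν
  intro ν
  induction h : Finsupp.weight Fin.val ν using Nat.strong_induction_on generalizing ν with
  | _ N ih =>
    by_cases hν : NoBrokenCircuit K c {i | ν i ≠ 0}
    · refine Submodule.mem_sup_right ((mem_restrictSupport_iff K).mpr ?_)
      intro μ hμ
      rwa [Finset.mem_singleton.mp (support_monomial_subset hμ)]
    · refine (sup_le le_sup_left (Submodule.span_le.mpr ?_) : _ ≤ P)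
        (monomial_mem_sup_span_lower_weight hI hν)
      rintro _ ⟨μ, hμ, rfl⟩
      exact ih _ (h ▸ hμ) μ rfl

section LinearIndependence

variable {ι σ : Type*} [Fintype σ]

theorem sum_top_layer_eq_zero [DecidableEq σ] {c : Fin (n + 1) → σ → K}
    (hc : c (Fin.last n) ≠ 0) {M k : ℕ} (hkM : k ≤ M) {t : Finset ι} {ν : ι → Fin (n + 1) → ℕ}
    (hk : ∀ x ∈ t, ν x (Fin.last n) ≤ k) (π : (σ → K) →ₗ[K] (σ → K))
    (hπ : k = 0 ∨ π (c (Fin.last n)) = 0) {lam : ι → K}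
    (h : ∑ x ∈ t, lam x • ∏ i, linearForm (c i) ^ (M - ν x i) = 0) :
    ∑ x ∈ t with ν x (Fin.last n) = k,
      lam x • ∏ i : Fin n, linearForm (π (c i.castSucc)) ^ (M - ν x i.castSucc) = 0 := by
  have hlayers : ∑ x ∈ t, lam x • ((∏ i : Fin n, linearForm (c i.castSucc) ^ (M - ν x i.castSucc))
      * linearForm (c (Fin.last n)) ^ (k - ν x (Fin.last n))) = 0 := by
    have hpow : linearForm (c (Fin.last n)) ^ (M - k) ≠ 0 :=
      pow_ne_zero _ ((map_ne_zero_iff _ linearForm_injective).mpr hc)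
    refine (mul_eq_zero.mp ?_).resolve_right hpow
    rw [Finset.sum_mul, ← h]
    refine Finset.sum_congr rfl fun x hx => ?_
    rw [smul_mul_assoc, mul_assoc, ← pow_add, Fin.prod_univ_castSucc]
    have := hk x hx
    congr 3
    omega
  -- The substitution `ℓ(v) ↦ ℓ(π v)` kills `ℓ(c (last n))`, hence every layer below `k`.
  have hρ := congrArg (aeval fun j => linearForm (π (Pi.single j 1))) hlayers
  rw [map_sum, map_zero] at hρ
  rw [Finset.sum_filter]
  refine Eq.trans (Finset.sum_congr rfl fun x hx => ?_) hρ
  simp only [map_smul, map_mul, map_prod, map_pow, aeval_linearForm]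
  split_ifs with hxk
  · rw [hxk, Nat.sub_self, pow_zero, mul_one]
  · have := hk x hx
    rw [hπ.resolve_left (by omega), map_zero, zero_pow (by omega), mul_zero, smul_zero]

theorem linearIndepOn_prod_linearForm_pow (c : Fin n → σ → K) (M : ℕ) (s : Finset ι)
    (ν : ι → Fin n → ℕ) (hν : Set.InjOn ν s) (hM : ∀ x ∈ s, ∀ i, ν x i ≤ M)
    (hnbc : ∀ x ∈ s, NoBrokenCircuit K c {i | ν x i ≠ 0}) :
    LinearIndepOn K (fun x => ∏ i, linearForm (c i) ^ (M - ν x i)) (s : Set ι) := by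
  classical
  induction n generalizing s with
  | zero =>
    refine linearIndepOn_finset_iff.mpr fun lam h x hx => ?_
    have hs : s = {x} := Finset.eq_singleton_iff_unique_mem.mpr
      ⟨hx, fun y hy => hν hy hx (Subsingleton.elim _ _)⟩
    simpa [hs] using h
  | succ n ih =>
    refine linearIndepOn_finset_iff.mpr fun lam h => ?_
    set l := Fin.last n
    set t := s.filter (lam · ≠ 0)
    suffices ht : t = ∅ by
      intro x hx
      by_contra hx'
      exact Finset.notMem_empty x (ht ▸ Finset.mem_filter.mpr ⟨hx, hx'⟩)
    by_contra ht
    obtain ⟨x₀, hx₀, hmax⟩ :=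
      Finset.exists_max_image t (ν · l) (Finset.nonempty_iff_ne_empty.mpr ht)
    have hx₀s := (Finset.mem_filter.mp hx₀).1
    set k := ν x₀ l
    -- `π` contracts `c l` if `l` occurs in the top layer `ν · l = k`, and deletes it if `k = 0`.
    obtain ⟨π, hπ⟩ := Submodule.exists_ker_eq (Submodule.span K (c '' ({i | ν x₀ i ≠ 0} ∩ {l})))
    have hπl : k = 0 ∨ π (c l) = 0 := or_iff_not_imp_left.mpr fun hk =>
      LinearMap.mem_ker.mp (hπ ▸ Submodule.subset_span ⟨l, ⟨hk, rfl⟩, rfl⟩)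
    have ht_sum : ∑ x ∈ t, lam x • ∏ i, linearForm (c i) ^ (M - ν x i) = 0 := by
      rw [Finset.sum_filter_of_ne fun x _ hx => left_ne_zero_of_smul hx, h]
    have hlayer := sum_top_layer_eq_zero ((hnbc x₀ hx₀s).ne_zero l) (hM x₀ hx₀s l) hmax π hπl
      ht_sum
    set u := t.filter (ν · l = k)
    have hu : ∀ {x}, x ∈ u → x ∈ s ∧ ν x l = k := fun hx =>
      ⟨(Finset.mem_filter.mp (Finset.mem_filter.mp hx).1).1, (Finset.mem_filter.mp hx).2⟩
    have hind := ih (π ∘ c ∘ Fin.castSucc) u (fun x => Fin.init (ν x)) ?inj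
      (fun x hx i => hM x (hu hx).1 i.castSucc) ?nbc
    · exact (Finset.mem_filter.mp hx₀).2
        (linearIndepOn_finset_iff.mp hind lam hlayer x₀ (Finset.mem_filter.mpr ⟨hx₀, rfl⟩))
    case inj =>
      intro x hx y hy hxy
      refine hν (hu hx).1 (hu hy).1 ?_
      rw [← Fin.snoc_init_self (ν x), ← Fin.snoc_init_self (ν y)]
      simp only at hxy
      rw [hxy, (hu hx).2, (hu hy).2]
    case nbc =>
      intro x hx
      refine (hnbc x (hu hx).1).comp_castSucc π (hπ.trans_le (Submodule.span_mono ?_))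
      rintro _ ⟨i, ⟨hi, rfl⟩, rfl⟩
      exact ⟨l, ⟨by simpa [(hu hx).2] using hi, rfl⟩, rfl⟩

end LinearIndependence

section ReciprocalMap

variable {L : Type*} [Field L] [Algebra K L] {y : Fin n → L}

theorem prod_mul_aeval_inv_iotaL (hy : ∀ i, y i ≠ 0) (a : Fin n → K) :
    (∏ j ∈ lsupp a, y j) * aeval (fun i => (y i)⁻¹) (iotaL a) = ∑ i, a i • y i := by
  rw [iotaL, map_sum, Finset.mul_sum,
    ← Finset.sum_subset (Finset.subset_univ (lsupp a)) fun i _ hi => by simp_all [lsupp]]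
  refine Finset.sum_congr rfl fun i hi => ?_
  rw [map_mul, map_prod, aeval_C, ← Finset.mul_prod_erase _ _ hi, Algebra.smul_def]
  simp only [aeval_X, Finset.prod_inv_distrib]
  have : ∏ j ∈ (lsupp a).erase i, y j ≠ 0 := Finset.prod_ne_zero_iff.mpr fun j _ => hy j
  field_simp

theorem prod_pow_mul_aeval_inv_monomial (hy : ∀ i, y i ≠ 0) {M : ℕ} {ν : Fin n →₀ ℕ}
    (hν : ∀ i, ν i ≤ M) (r : K) :
    (∏ i, y i ^ M) * aeval (fun i => (y i)⁻¹) (monomial ν r) = r • ∏ i, y i ^ (M - ν i) := by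
  rw [aeval_monomial, Finsupp.prod_fintype _ _ fun i => pow_zero _, Algebra.smul_def,
    mul_left_comm, ← Finset.prod_mul_distrib]
  congr 2 with i
  rw [inv_pow, pow_sub₀ _ (hy i) (hν i)]

variable {σ : Type*} [Fintype σ]

/-- Its image is the Orlik–Terao algebra of `c`. -/
def reciprocalMap (c : Fin n → σ → K) :
    MvPolynomial (Fin n) K →ₐ[K] FractionRing (MvPolynomial σ K) :=
  aeval fun i => (algebraMap (MvPolynomial σ K) _ (linearForm (c i)))⁻¹

theorem algebraMap_linearForm_ne_zero {c : Fin n → σ → K} (hc : ∀ i, c i ≠ 0) (i : Fin n) :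
    algebraMap (MvPolynomial σ K) (FractionRing (MvPolynomial σ K)) (linearForm (c i)) ≠ 0 :=
  (map_ne_zero_iff _ (IsFractionRing.injective _ _)).mpr
    ((map_ne_zero_iff _ linearForm_injective).mpr (hc i))

theorem span_iotaL_le_ker_reciprocalMap {c : Fin n → σ → K} (hc : ∀ i, c i ≠ 0) :
    Ideal.span (iotaL '' (LinearMap.ker (Fintype.linearCombination K c) : Set (Fin n → K))) ≤
      RingHom.ker (reciprocalMap c) := by
  rw [Ideal.span_le]
  rintro _ ⟨a, ha, rfl⟩
  have hsum : ∑ i, a i • algebraMap (MvPolynomial σ K) (FractionRing (MvPolynomial σ K))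
      (linearForm (c i)) = 0 := by
    rw [← IsScalarTower.coe_toAlgHom' K (MvPolynomial σ K)]
    simp_rw [← map_smul, ← map_sum]
    rw [← Fintype.linearCombination_apply, LinearMap.mem_ker.mp ha, map_zero, map_zero]
  have hprod := prod_mul_aeval_inv_iotaL (algebraMap_linearForm_ne_zero hc) a
  rw [hsum] at hprod
  exact (mul_eq_zero.mp hprod).resolve_left
    (Finset.prod_ne_zero_iff.mpr fun j _ => algebraMap_linearForm_ne_zero hc j)

theorem eq_zero_of_reciprocalMap_eq_zero {c : Fin n → σ → K} (hc : ∀ i, c i ≠ 0)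
    {g : MvPolynomial (Fin n) K}
    (hg : g ∈ restrictSupport K {ν | NoBrokenCircuit K c {i | ν i ≠ 0}})
    (h0 : reciprocalMap c g = 0) : g = 0 := by
  classical
  set M := g.totalDegree
  have hM : ∀ ν ∈ g.support, ∀ i, ν i ≤ M := fun ν hν i =>
    (Finsupp.le_degree i ν).trans (le_totalDegree hν)
  have hsum : ∑ ν ∈ g.support, coeff ν g • ∏ i, linearForm (c i) ^ (M - ν i) = 0 := by
    apply IsFractionRing.injective (MvPolynomial σ K) (FractionRing (MvPolynomial σ K))
    rw [map_zero, ← mul_zero (∏ i, algebraMap _ (FractionRing (MvPolynomial σ K))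
      (linearForm (c i)) ^ M), ← h0, reciprocalMap, ← IsScalarTower.coe_toAlgHom' K]
    conv_rhs => rw [g.as_sum, map_sum, Finset.mul_sum]
    simp only [map_sum, map_smul, map_prod, map_pow]
    refine Finset.sum_congr rfl fun ν hν => ?_
    exact (prod_pow_mul_aeval_inv_monomial (algebraMap_linearForm_ne_zero hc) (hM ν hν) _).symm
  have hcoeff := linearIndepOn_finset_iff.mp (linearIndepOn_prod_linearForm_pow c M g.support
    (⇑) DFunLike.coe_injective.injOn hM hg) (coeff · g) hsum
  ext ν
  by_cases hν : ν ∈ g.support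
  · simp [hcoeff ν hν]
  · simpa using hν

theorem ker_reciprocalMap {c : Fin n → σ → K} (hc : ∀ i, c i ≠ 0) :
    RingHom.ker (reciprocalMap c) =
      Ideal.span (iotaL '' (LinearMap.ker (Fintype.linearCombination K c) : Set (Fin n → K))) := by
  set I := Ideal.span (iotaL '' (LinearMap.ker (Fintype.linearCombination K c) : Set (Fin n → K)))
  refine le_antisymm (fun f hf => ?_) (span_iotaL_le_ker_reciprocalMap hc)
  have hspan := sup_restrictSupport_noBrokenCircuit_eq_top c (I := I)
    fun a ha => Ideal.subset_span ⟨a, ha, rfl⟩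
  obtain ⟨p, hp, g, hg, rfl⟩ := Submodule.mem_sup.mp (hspan ▸ Submodule.mem_top (x := f))
  have hgker : reciprocalMap c g = 0 := by
    rw [RingHom.mem_ker, map_add, span_iotaL_le_ker_reciprocalMap hc hp, zero_add] at hf
    exact hf
  rw [eq_zero_of_reciprocalMap_eq_zero hc hg hgker, add_zero]
  exact hp

end ReciprocalMap

theorem exists_Iid_eq_ker_reciprocalMap {R : Set (Fin n → K)}
    (hR : ∀ i, Pi.single i 1 ∉ Submodule.span K R) :
    ∃ c : Fin n → Fin n → K, (∀ i, c i ≠ 0) ∧ Iid R = RingHom.ker (reciprocalMap c) := by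
  obtain ⟨c, hc⟩ := exists_ker_fintypeLinearCombination_eq (Submodule.span K R)
  have hc0 : ∀ i, c i ≠ 0 := fun i hi => hR i <| hc ▸ by simp [hi]
  exact ⟨c, hc0, by rw [ker_reciprocalMap hc0, hc, Iid]⟩

theorem Iid_isPrime {R : Set (Fin n → K)} (hR : ∀ i, Pi.single i 1 ∉ Submodule.span K R) :
    (Iid R).IsPrime := by
  obtain ⟨c, -, hc⟩ := exists_Iid_eq_ker_reciprocalMap hR
  exact hc ▸ RingHom.ker_isPrime _

theorem X_notMem_Iid {R : Set (Fin n → K)} (hR : ∀ i, Pi.single i 1 ∉ Submodule.span K R)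
    (i : Fin n) : X i ∉ Iid R := by
  obtain ⟨c, hc0, hc⟩ := exists_Iid_eq_ker_reciprocalMap hR
  rw [hc, RingHom.mem_ker, reciprocalMap, aeval_X]
  exact inv_ne_zero (algebraMap_linearForm_ne_zero hc0 i)

theorem xAll_notMem_of_isPrime {P : Ideal (MvPolynomial (Fin n) K)} [P.IsPrime]
    (hP : ∀ i, X i ∉ P) : xAll n K ∉ P := by
  simpa [xAll, Ideal.IsPrime.prod_mem_iff] using hP

theorem Jid_le_Iid (R : Set (Fin n → K)) : Jid R ≤ Iid R :=
  Ideal.span_mono (Set.image_mono Submodule.subset_span)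

def theta : (Fin n → K) →ₗ[K] MvPolynomial (Fin n) K :=
  Fintype.linearCombination K fun i => ∏ j ∈ Finset.univ.erase i, X j

theorem theta_eq_prod_mul_iotaL (a : Fin n → K) :
    theta a = (∏ j ∈ Finset.univ \ lsupp a, X j) * iotaL a := by
  rw [iotaL, Finset.mul_sum, theta, Fintype.linearCombination_apply,
    ← Finset.sum_subset (Finset.subset_univ (lsupp a)) fun i _ hi => by simp_all [lsupp]]
  refine Finset.sum_congr rfl fun i hi => ?_
  rw [smul_eq_C_mul, mul_left_comm, ← Finset.prod_union]
  · congr 2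
    ext j
    simp only [Finset.mem_erase, Finset.mem_union, Finset.mem_sdiff, Finset.mem_univ, true_and,
      and_true]
    grind
  · exact Finset.sdiff_disjoint.mono_right (Finset.erase_subset _ _)

theorem xAll_mul_iotaL (a : Fin n → K) :
    xAll n K * iotaL a = (∏ j ∈ lsupp a, X j) * theta a := by
  rw [theta_eq_prod_mul_iotaL, xAll, ← Finset.prod_sdiff (Finset.subset_univ (lsupp a))]
  ring

theorem theta_mem_Jid {R : Set (Fin n → K)} {a : Fin n → K} (ha : a ∈ Submodule.span K R) :
    theta a ∈ Jid R := by
  refine Submodule.span_le (p := (Jid R).restrictScalars K |>.comap theta) |>.mpr ?_ ha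
  intro r hr
  have hr' : iotaL r ∈ Jid R := Ideal.subset_span ⟨r, hr, rfl⟩
  simpa [theta_eq_prod_mul_iotaL] using Ideal.mul_mem_left _ _ hr'

theorem Iid_le_colon_xAll (R : Set (Fin n → K)) : Iid R ≤ (Jid R).colon {xAll n K} := by
  rw [Iid, Ideal.span_le]
  rintro _ ⟨a, ha, rfl⟩
  rw [SetLike.mem_coe, Submodule.mem_colon_singleton, smul_eq_mul, mul_comm, xAll_mul_iotaL]
  exact Ideal.mul_mem_left _ _ (theta_mem_Jid ha)

theorem Jid_eq_inter_and_Iid_unique_associated_prime_general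
    {V : Type*} [AddCommGroup V] [Module K V]
    (α : Fin n → Module.Dual K V) (hne : ∀ i, α i ≠ 0)
    (R : Set (Fin n → K)) (hR : ∀ r ∈ R, IsRel α r) :
    Jid R = Iid R ⊓ (Jid R ⊔ Ideal.span {xAll n K}) ∧
    Iid R ∈ associatedPrimes (MvPolynomial (Fin n) K) (MvPolynomial (Fin n) K ⧸ Jid R) ∧
    (∀ i : Fin n, (X i : MvPolynomial (Fin n) K) ∉ Iid R) ∧
    ∀ P ∈ associatedPrimes (MvPolynomial (Fin n) K) (MvPolynomial (Fin n) K ⧸ Jid R),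
      (∀ i : Fin n, (X i : MvPolynomial (Fin n) K) ∉ P) → P = Iid R := by
  have hspan : Submodule.span K R ≤ LinearMap.ker (Fintype.linearCombination K α) :=
    Submodule.span_le.mpr hR
  have hsingle : ∀ i, Pi.single i 1 ∉ Submodule.span K R := fun i hi =>
    hne i (by simpa using hspan hi)
  have hprime := Iid_isPrime hsingle
  have hxAll := xAll_notMem_of_isPrime (X_notMem_Iid hsingle)
  have hJI := Jid_le_Iid R
  have hIx := Iid_le_colon_xAll R
  refine ⟨Ideal.eq_inf_sup_span_singleton_of_le_colon hJI hprime hxAll hIx,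
    Ideal.mem_associatedPrimes_quotient_of_le_colon hJI hprime hxAll hIx,
    X_notMem_Iid hsingle, fun P hP hPX => ?_⟩
  have : P.IsPrime := hP.isPrime
  exact Ideal.eq_of_mem_associatedPrimes_quotient_of_le_colon hJI hprime hIx hP
    (xAll_notMem_of_isPrime hPX)

/-- Corollary 3.3, second part (and Equation (3.4)): for a central arrangement `𝒜` and
`ℜ ⊆ F(𝒜)`, one has `J(ℜ) = I(ℜ) ∩ (J(ℜ) + (x_[n]))`, and `I(ℜ)` is the unique associated
prime of `J(ℜ)` (i.e. of `S/J(ℜ)`) containing none of the variables `x₁,…,xₙ`. -/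
theorem Jid_eq_inter_and_Iid_unique_associated_prime
    {V : Type*} [AddCommGroup V] [Module K V] [FiniteDimensional K V]
    (α : Fin n → Module.Dual K V) (hne : ∀ i, α i ≠ 0)
    (hdist : ∀ i j, i ≠ j → LinearMap.ker (α i) ≠ LinearMap.ker (α j))
    (R : Set (Fin n → K)) (hR : ∀ r ∈ R, IsRel α r) :
    Jid R = Iid R ⊓ (Jid R ⊔ Ideal.span {xAll n K}) ∧
    Iid R ∈ associatedPrimes (MvPolynomial (Fin n) K) (MvPolynomial (Fin n) K ⧸ Jid R) ∧
    (∀ i : Fin n, (X i : MvPolynomial (Fin n) K) ∉ Iid R) ∧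
    ∀ P ∈ associatedPrimes (MvPolynomial (Fin n) K) (MvPolynomial (Fin n) K ⧸ Jid R),
      (∀ i : Fin n, (X i : MvPolynomial (Fin n) K) ∉ P) → P = Iid R :=
  Jid_eq_inter_and_Iid_unique_associated_prime_general α hne R hR

end
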